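/- arXiv:math/0409539 — 2 statements merged into one kernel-verified Lean document; each statement's English description precedes it below -/
import Mathlib

section
/- Let {ρ_i}_{i∈ℤ^d} be measurable functions ρ_i : Ω → [0,∞) with λ_i(ρ_i ∣ ω) = 1 for all i and ω, satisfying hypotheses (H1) and (H2), and let {ρ_Λ}_{Λ∈𝒮} be the family defined by the recursion ρ_{Λ∪{i}} = ρ_Λ/R_Λ^i with R_Λ^i(ω) = ((ρ_Λ/ρ_i) · λ_i(ρ_i ρ_Λ^{-1}))(x_Λ ω) for x_Λ ∈ b(Λ,{i},ω). Then each ρ_Λ is normalized: λ_Λ(ρ_Λ ∣ ω) = 1 for every finite Λ ⊆ ℤ^d and every ω ∈ Ω. -/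
open MeasureTheory ProbabilityTheory
open scoped ENNReal NNReal

namespace GibbsSingleton

/-- Configuration space `E^ι`. -/
abbrev Config (ι E : Type*) := ι → E

variable {ι E : Type*}

/-- The configuration equal to `σ` on `Λ` and to `ω` off `Λ`. -/
def subst [DecidableEq ι] (Λ : Finset ι) (σ : {x // x ∈ Λ} → E) (ω : Config ι E) :
    Config ι E := fun i => if h : i ∈ Λ then σ ⟨i, h⟩ else ω i

variable [MeasurableSpace E]

/-- The free kernel `λ_Λ` applied to an `ℝ≥0∞`-valued function:
`λ_Λ(h ∣ ω) = ∫ h(σ_Λ ω) λ^Λ(dσ_Λ)`. -/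
noncomputable def freeF [DecidableEq ι] (lam : ι → Measure E) (Λ : Finset ι)
    (h : Config ι E → ℝ≥0∞) (ω : Config ι E) : ℝ≥0∞ :=
  ∫⁻ σ : {x // x ∈ Λ} → E, h (subst Λ σ ω) ∂(Measure.pi fun i : {x // x ∈ Λ} => lam i.1)

/-- The function `ρ_i ρ_j⁻¹`, `ℝ≥0∞`-valued. -/
noncomputable def rat (ρ : ι → Config ι E → ℝ≥0) (i j : ι) (η : Config ι E) : ℝ≥0∞ :=
  (ρ i η : ℝ≥0∞) / (ρ j η : ℝ≥0∞)

/-- The set `b(j,V,ω)` of good configurations at site `j` given `ω` outside `V ∪ {j}`. -/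
noncomputable def bSet [DecidableEq ι] (lam : ι → Measure E) (ρ : ι → Config ι E → ℝ≥0)
    (j : ι) (V : Finset ι) (ω : Config ι E) : Set E :=
  {x | (∀ σ : {y // y ∈ V} → E, 0 < ρ j (subst V σ (Function.update ω j x))) ∧
    ∀ i, i ≠ j →
      0 < (⨅ σ : {y // y ∈ V} → E,
          freeF lam {i} (rat ρ i j) (subst V σ (Function.update ω j x))) ∧
      (⨆ σ : {y // y ∈ V} → E,
          freeF lam {i} (rat ρ i j) (subst V σ (Function.update ω j x))) < ⊤}

/-- The multi-site good set `b(V,W,ω)`. -/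
noncomputable def bSetF [DecidableEq ι] (lam : ι → Measure E) (ρ : ι → Config ι E → ℝ≥0)
    (V W : Finset ι) (ω : Config ι E) : Set ({x // x ∈ V} → E) :=
  {xV | ∀ k : {x // x ∈ V}, xV k ∈ bSet lam ρ k.1 ((V.erase k.1) ∪ W) ω}

/-- The set `B(j,V) = {ω : ω_j ∈ b(j,V,ω)}`. -/
noncomputable def BSet [DecidableEq ι] (lam : ι → Measure E) (ρ : ι → Config ι E → ℝ≥0)
    (j : ι) (V : Finset ι) : Set (Config ι E) :=
  {ω | ω j ∈ bSet lam ρ j V ω}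

/-- Hypothesis (H1): every good set `b(j,V,ω)` is nonempty. -/
def H1 [DecidableEq ι] (lam : ι → Measure E) (ρ : ι → Config ι E → ℝ≥0) : Prop :=
  ∀ (ω : Config ι E) (j : ι) (V : Finset ι), j ∉ V → (bSet lam ρ j V ω).Nonempty

/-- The order-consistency identity appearing in hypothesis (H2), with the convention
`1/∞ = 0` built into `ℝ≥0∞` division. -/
def H2id [DecidableEq ι] (lam : ι → Measure E) (ρ : ι → Config ι E → ℝ≥0)
    (i j : ι) (ω : Config ι E) : Prop :=
  ∀ xi ∈ bSet lam ρ i {j} ω, ∀ xj ∈ bSet lam ρ j {i} ω,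
    ((ρ i ω : ℝ≥0∞) * (ρ j (Function.update ω i xi) : ℝ≥0∞)) /
      ((ρ i (Function.update ω i xi) : ℝ≥0∞) *
        freeF lam {j} (rat ρ j i) (Function.update ω i xi))
    = ((ρ j ω : ℝ≥0∞) * (ρ i (Function.update ω j xj) : ℝ≥0∞)) /
      ((ρ j (Function.update ω j xj) : ℝ≥0∞) *
        freeF lam {i} (rat ρ i j) (Function.update ω j xj))

/-- Hypothesis (H2). -/
def H2 [DecidableEq ι] (lam : ι → Measure E) (ρ : ι → Config ι E → ℝ≥0) : Prop :=
  ∀ i j, i ≠ j → ∀ ω : Config ι E, H2id lam ρ i j ω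

/-- `R_Θ^Γ` evaluated using the choice `x_Θ`:
`((ρ_Θ/ρ_Γ) ⬝ λ_Γ(ρ_Γ ρ_Θ⁻¹))(x_Θ ω)`. -/
noncomputable def Rexpr [DecidableEq ι] (lam : ι → Measure E)
    (ρF : Finset ι → Config ι E → ℝ≥0) (Θ Γ : Finset ι) (x : {y // y ∈ Θ} → E)
    (ω : Config ι E) : ℝ≥0∞ :=
  ((ρF Θ (subst Θ x ω) : ℝ≥0∞) / (ρF Γ (subst Θ x ω) : ℝ≥0∞)) *
    freeF lam Γ (fun η => (ρF Γ η : ℝ≥0∞) / (ρF Θ η : ℝ≥0∞)) (subst Θ x ω)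

/-- The family `ρ_Λ` is obtained from the singletons `ρ_i` by the recursive construction
`ρ_{Λ∪{i}} = ρ_Λ / R_Λ^i`, `R_Λ^i(ω) = ((ρ_Λ/ρ_i) ⬝ λ_i(ρ_i ρ_Λ⁻¹))(x_Λ ω)`,
`x_Λ ∈ b(Λ,{i},ω)` (the value being independent of this choice). -/
def IsRec [DecidableEq ι] (lam : ι → Measure E) (ρ : ι → Config ι E → ℝ≥0)
    (ρF : Finset ι → Config ι E → ℝ≥0) : Prop :=
  (∀ ω, ρF ∅ ω = 1) ∧ (∀ i, ρF {i} = ρ i) ∧ (∀ Λ, Measurable (ρF Λ)) ∧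
  ∀ (Λ : Finset ι) (i : ι), i ∉ Λ → ∀ ω : Config ι E,
    (∀ x ∈ bSetF lam ρ Λ {i} ω, ∀ x' ∈ bSetF lam ρ Λ {i} ω,
      Rexpr lam ρF Λ {i} x ω = Rexpr lam ρF Λ {i} x' ω) ∧
    ∀ x ∈ bSetF lam ρ Λ {i} ω,
      (ρF (insert i Λ) ω : ℝ≥0∞) = (ρF Λ ω : ℝ≥0∞) / Rexpr lam ρF Λ {i} x ω

/-- The sub-σ-algebra `𝓕_U` of events generated by the coordinates in `U`. -/
def cylSigma (E : Type*) [MeasurableSpace E] {ι : Type*} (U : Set ι) :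
    MeasurableSpace (Config ι E) :=
  MeasurableSpace.comap (fun ω (i : U) => ω i.1) MeasurableSpace.pi

/-- A specification: a family of probability kernels, measurable w.r.t. the outside
σ-algebra, proper, and consistent. -/
def IsSpecification (γ : Finset ι → Kernel (Config ι E) (Config ι E)) : Prop :=
  (∀ Λ, IsMarkovKernel (γ Λ)) ∧
  (∀ (Λ : Finset ι) (A : Set (Config ι E)), MeasurableSet A →
    Measurable[cylSigma E ((Λ : Set ι)ᶜ)] fun ω => γ Λ ω A) ∧
  (∀ (Λ : Finset ι) (B : Set (Config ι E)), MeasurableSet[cylSigma E ((Λ : Set ι)ᶜ)] B →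
    ∀ ω, γ Λ ω B = B.indicator (fun _ => (1 : ℝ≥0∞)) ω) ∧
  (∀ Λ Δ : Finset ι, Λ ⊆ Δ → (γ Λ).comp (γ Δ) = γ Δ)

/-- The kernel family `γ` is `{ρ_Λ λ_Λ}`. -/
def MatchesDensity [DecidableEq ι] (lam : ι → Measure E)
    (γ : Finset ι → Kernel (Config ι E) (Config ι E))
    (ρF : Finset ι → Config ι E → ℝ≥0) : Prop :=
  ∀ (Λ : Finset ι) (ω : Config ι E) (A : Set (Config ι E)), MeasurableSet A →
    γ Λ ω A = freeF lam Λ (fun η => (ρF Λ η : ℝ≥0∞) * A.indicator (fun _ => 1) η) ω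

end GibbsSingleton

open GibbsSingleton MeasureTheory ProbabilityTheory

/-!
Induction on `Λ`. To add a site `i ∉ Λ`, fix a configuration `ζ` that agrees with `ω` off `Λ`
and is good, i.e. `ζ|_Λ ∈ b(Λ, {i}, ζ)` (it exists by (H1)). Write `ζ_t = update ζ i t`. The
recursion, evaluated with this choice, gives `ρ_{Λ∪{i}} = ρ_Λ / R(t)` on every configuration
with spin `t` at `i`, where `R(t) = ((ρ_Λ / ρ_i) ⬝ λ_i(ρ_i ρ_Λ⁻¹))(ζ_t)` does not depend on the
spins in `Λ`. Integrating over `Λ` and using `λ_Λ(ρ_Λ) = 1` leaves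
`1 / R(t) = (ρ_i / ρ_Λ)(ζ_t) / λ_i(ρ_i ρ_Λ⁻¹)(ζ)`, whose `λ_i`-integral is `1`. That `ρ_Λ > 0`
and `0 < λ_i(ρ_i ρ_Λ⁻¹) < ∞` at good configurations is a second induction, driven by the
inf/sup bounds in (H1).

The a priori measures need not be σ-finite, so Fubini is applied to the restrictions of the
`λ_k` to the supports of `t ↦ ρ_k(ζ^k_t)`, with `ζ^k` good around `k`. These supports have
σ-finite measure because `ρ_k` is normalized, and by the recursion they carry `ρ_Λ`.
-/

namespace ENNReal

variable {a b c k : ℝ≥0∞}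

theorem inv_div_mul (ha₀ : a ≠ 0) (ha : a ≠ ⊤) (hk₀ : k ≠ 0) (hk : k ≠ ⊤) :
    (a / b * k)⁻¹ = b / a / k := by
  rw [ENNReal.mul_inv (.inr hk) (.inr hk₀), ENNReal.inv_div (.inr ha) (.inr ha₀),
    div_eq_mul_inv (b / a)]

theorem div_div_mul_cancel_left (ha₀ : a ≠ 0) (ha : a ≠ ⊤) (hk₀ : k ≠ 0) (hk : k ≠ ⊤) :
    a / (a / b * k) = b / k := by
  rw [div_eq_mul_inv a, inv_div_mul ha₀ ha hk₀ hk, ← mul_div_assoc,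
    ENNReal.mul_div_cancel ha₀ ha]

theorem div_div_right_eq_div_mul (hk₀ : k ≠ 0) (hk : k ≠ ⊤) :
    a / (b / k) = a / b * k := by
  rw [div_eq_mul_inv, ENNReal.inv_div (.inl hk) (.inl hk₀), div_eq_mul_inv, div_eq_mul_inv]
  ring

theorem eq_zero_of_eq_div_div_zero_mul (hc : c ≠ ⊤) (h : c = a / (b / 0 * k)) : c = 0 := by
  rcases eq_or_ne (b / 0 * k) 0 with hd | hd
  · rw [hd] at h
    rcases eq_or_ne a 0 with rfl | ha
    · simpa using h
    · exact absurd (h.trans (ENNReal.div_zero ha)) hc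
  · have hb : b ≠ 0 := by rintro rfl; simp at hd
    rw [ENNReal.div_zero hb, ENNReal.top_mul (right_ne_zero_of_mul hd)] at h
    simpa using h

end ENNReal

namespace MeasureTheory

open Set Function

section Product

variable {κ α : Type*} [Fintype κ] [MeasurableSpace α]

theorem Measure.pi_apply_eq_pi_restrict {μ : κ → Measure α} {T : κ → Set α}
    (hT : ∀ k, MeasurableSet (T k)) {A : Set (κ → α)} (hA : MeasurableSet A)
    (hAT : A ⊆ univ.pi T) :
    Measure.pi μ A = Measure.pi (fun k => (μ k).restrict (T k)) A := by
  rw [Measure.pi_def, Measure.pi_def, toMeasure_apply _ _ hA, toMeasure_apply _ _ hA]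
  refine le_antisymm ?_ ?_
  · have hle : OuterMeasure.restrict (univ.pi T) (OuterMeasure.pi fun k => (μ k).toOuterMeasure)
        ≤ OuterMeasure.pi fun k => ((μ k).restrict (T k)).toOuterMeasure := by
      refine OuterMeasure.le_pi.2 fun s _ => ?_
      rw [OuterMeasure.restrict_apply, ← pi_inter_distrib]
      refine (OuterMeasure.pi_pi_le _ _).trans_eq (Finset.prod_congr rfl fun k _ => ?_)
      simp [Measure.restrict_apply' (hT k)]
    simpa [OuterMeasure.restrict_apply, inter_eq_left.2 hAT] using hle A
  · refine (OuterMeasure.le_pi.2 fun s _ => ?_) A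
    exact (OuterMeasure.pi_pi_le _ s).trans
      (Finset.prod_le_prod' fun k _ => Measure.restrict_apply_le _ _)

theorem lintegral_pi_eq_pi_restrict {μ : κ → Measure α} {T : κ → Set α}
    (hT : ∀ k, MeasurableSet (T k)) {g : (κ → α) → ℝ≥0∞}
    (hg : ∀ x, g x ≠ 0 → x ∈ univ.pi T) :
    ∫⁻ x, g x ∂Measure.pi μ = ∫⁻ x, g x ∂Measure.pi fun k => (μ k).restrict (T k) := by
  have hpi : MeasurableSet (univ.pi T) := .univ_pi hT
  have hres : (Measure.pi μ).restrict (univ.pi T)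
      = (Measure.pi fun k => (μ k).restrict (T k)).restrict (univ.pi T) := by
    ext B hB
    rw [Measure.restrict_apply hB, Measure.restrict_apply hB]
    exact Measure.pi_apply_eq_pi_restrict hT (hB.inter hpi) inter_subset_right
  have hsupp : support g ⊆ univ.pi T := fun x hx => hg x hx
  rw [← setLIntegral_eq_of_support_subset hsupp, hres,
    setLIntegral_eq_of_support_subset hsupp]

end Product

theorem sigmaFinite_restrict_pos_of_lintegral_ne_top {α : Type*} [MeasurableSpace α] {μ : Measure α}
    {g : α → ℝ≥0∞} (hg : Measurable g) (hint : ∫⁻ t, g t ∂μ ≠ ⊤) :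
    SigmaFinite (μ.restrict {t | 0 < g t}) := by
  set T := {t | 0 < g t}
  refine ⟨⟨⟨fun n => {t | ((n : ℝ≥0∞) + 1)⁻¹ ≤ g t} ∪ Tᶜ, fun _ => trivial, fun n => ?_, ?_⟩⟩⟩
  · have hTc : μ.restrict T Tᶜ = 0 := by
      rw [Measure.restrict_apply' (measurableSet_lt measurable_const hg), compl_inter_self,
        measure_empty]
    refine (measure_union_le _ _).trans_lt ?_
    rw [hTc, add_zero]
    refine ((Measure.restrict_le_self _).trans
      (meas_ge_le_lintegral_div hg.aemeasurable (by simp) (by simp))).trans_lt ?_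
    exact ENNReal.div_lt_top hint (by simp)
  · refine eq_univ_of_forall fun t => ?_
    by_cases ht : 0 < g t
    · obtain ⟨n, hn⟩ := ENNReal.exists_inv_nat_lt ht.ne'
      exact mem_iUnion.2 ⟨n, .inl (le_of_lt (lt_of_le_of_lt (by gcongr; simp) hn))⟩
    · exact mem_iUnion.2 ⟨0, .inr ht⟩

end MeasureTheory

namespace GibbsSingleton

open Set Function

def BddAwayOn {α : Type*} (f : α → ℝ≥0∞) (s : Set α) : Prop :=
  ∃ c C, 0 < c ∧ C < ⊤ ∧ MapsTo f s (Icc c C)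

section BddAway

variable {α : Type*} {f g : α → ℝ≥0∞} {s t : Set α} {a : α}

theorem BddAwayOn.mono (h : BddAwayOn f t) (hst : s ⊆ t) : BddAwayOn f s :=
  let ⟨c, C, hc, hC, hf⟩ := h; ⟨c, C, hc, hC, hf.mono_left hst⟩

theorem BddAwayOn.congr (h : BddAwayOn f s) (hfg : EqOn f g s) : BddAwayOn g s :=
  let ⟨c, C, hc, hC, hf⟩ := h; ⟨c, C, hc, hC, fun _ ha => hfg ha ▸ hf ha⟩

theorem BddAwayOn.ne_zero (h : BddAwayOn f s) (ha : a ∈ s) : f a ≠ 0 :=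
  let ⟨_, _, hc, _, hf⟩ := h; (hc.trans_le (hf ha).1).ne'

theorem BddAwayOn.ne_top (h : BddAwayOn f s) (ha : a ∈ s) : f a ≠ ⊤ :=
  let ⟨_, _, _, hC, hf⟩ := h; ((hf ha).2.trans_lt hC).ne

end BddAway

variable {ι E : Type*} [DecidableEq ι]

section Subst

variable {Λ : Finset ι} {σ : {x // x ∈ Λ} → E} {ω η : Config ι E} {i : ι}

@[simp]
theorem subst_apply_of_mem (h : i ∈ Λ) : subst Λ σ ω i = σ ⟨i, h⟩ := dif_pos h

@[simp]
theorem subst_apply_of_notMem (h : i ∉ Λ) : subst Λ σ ω i = ω i := dif_neg h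

theorem subst_eqOn_compl : EqOn (subst Λ σ ω) ω (↑Λ)ᶜ := fun _ h => subst_apply_of_notMem h

theorem subst_restrict_of_eqOn (h : EqOn η ω (↑Λ)ᶜ) : subst Λ (fun l => η l) ω = η := by
  funext l
  by_cases hl : l ∈ Λ
  · simp [hl]
  · simp [hl, h (show l ∉ (Λ : Set ι) from hl)]

theorem eq_subst_update_self_of_eqOn {ζ : Config ι E} {V : Finset ι} {j : ι}
    (hη : EqOn η ζ (↑V)ᶜ) : η = subst V (fun l => η l) (update ζ j (ζ j)) := by
  rw [update_eq_self, subst_restrict_of_eqOn hη]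

theorem eqOn_update_of_mem {ζ η : Config ι E} {W : Finset ι} {i : ι} (hη : EqOn η ζ (↑W)ᶜ)
    (hi : i ∈ W) (t : E) : EqOn (update η i t) ζ (↑W)ᶜ := fun l hl => by
  rw [update_of_ne (by rintro rfl; exact hl hi)]
  exact hη hl

end Subst

variable [MeasurableSpace E] {lam : ι → Measure E}

section FreeKernel

theorem freeF_empty (h : Config ι E → ℝ≥0∞) (ω : Config ι E) : freeF lam ∅ h ω = h ω :=
  congrFun (lmarginal_empty lam h) ω

theorem freeF_singleton (i : ι) (h : Config ι E → ℝ≥0∞) (ω : Config ι E) :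
    freeF lam {i} h ω = ∫⁻ t, h (update ω i t) ∂lam i :=
  congrFun (lmarginal_singleton h i) ω

theorem freeF_singleton_update (i : ι) (h : Config ι E → ℝ≥0∞) (ω : Config ι E) (t : E) :
    freeF lam {i} h (update ω i t) = freeF lam {i} h ω :=
  lmarginal_update_of_mem lam (Finset.mem_singleton_self i) h ω t

theorem BddAwayOn.freeF_singleton_mul {i : ι} {g h : Config ι E → ℝ≥0∞} {s : Set (Config ι E)}
    (hg : BddAwayOn (freeF lam {i} g) s) (hh : BddAwayOn h s)
    (hs : ∀ η ∈ s, ∀ t, update η i t ∈ s) : BddAwayOn (freeF lam {i} (g * h)) s := by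
  obtain ⟨a, A, ha, hA, hg⟩ := hg
  obtain ⟨c, C, hc, hC, hh⟩ := hh
  refine ⟨a * c, A * C, ENNReal.mul_pos ha.ne' hc.ne', ENNReal.mul_lt_top hA hC,
    fun η hη => ⟨?_, ?_⟩⟩
  · have hcT : c ≠ ⊤ := ((hh hη).1.trans_lt ((hh hη).2.trans_lt hC)).ne
    calc a * c ≤ freeF lam {i} g η * c := mul_le_mul_left (hg hη).1 c
      _ = ∫⁻ t, g (update η i t) * c ∂lam i := by
          rw [freeF_singleton, lintegral_mul_const' _ _ hcT]
      _ ≤ freeF lam {i} (g * h) η := by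
          rw [freeF_singleton]
          exact lintegral_mono fun t => mul_le_mul_right (hh (hs η hη t)).1 _
  · calc freeF lam {i} (g * h) η ≤ ∫⁻ t, g (update η i t) * C ∂lam i := by
          rw [freeF_singleton]
          exact lintegral_mono fun t => mul_le_mul_right (hh (hs η hη t)).2 _
      _ = freeF lam {i} g η * C := by rw [freeF_singleton, lintegral_mul_const' _ _ hC.ne]
      _ ≤ A * C := mul_le_mul_left (hg hη).2 C

theorem freeF_insert_eq_lintegral {T : ι → Set E} (hT : ∀ k, MeasurableSet (T k))
    [∀ k, SigmaFinite ((lam k).restrict (T k))] {f : Config ι E → ℝ≥0∞} (hf : Measurable f)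
    {i : ι} {Λ : Finset ι} (hi : i ∉ Λ) {ω : Config ι E}
    (hsupp : ∀ η, EqOn η ω (↑(insert i Λ))ᶜ → f η ≠ 0 → ∀ k ∈ insert i Λ, η k ∈ T k) :
    freeF lam (insert i Λ) f ω = ∫⁻ t, freeF lam Λ f (update ω i t) ∂lam i := by
  have hrestr : ∀ Δ ⊆ insert i Λ, ∀ η, EqOn η ω (↑(insert i Λ))ᶜ →
      freeF lam Δ f η = (∫⋯∫⁻_Δ, f ∂fun k => (lam k).restrict (T k)) η := by
    refine fun Δ hΔ η hη => lintegral_pi_eq_pi_restrict (T := fun k : {x // x ∈ Δ} => T k.1)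
      (g := fun σ => f (subst Δ σ η)) (fun k => hT k.1) fun σ hσ k _ => ?_
    have hσω : EqOn (subst Δ σ η) ω (↑(insert i Λ))ᶜ :=
      (subst_eqOn_compl.mono (compl_subset_compl.2 (Finset.coe_subset.2 hΔ))).trans hη
    simpa using hsupp _ hσω hσ k.1 (hΔ k.2)
  have hupd : ∀ t, EqOn (update ω i t) ω (↑(insert i Λ))ᶜ := fun t =>
    eqOn_update_of_mem (eqOn_refl _ _) (Finset.mem_insert_self i Λ) t
  have hvanish : support (fun t => freeF lam Λ f (update ω i t)) ⊆ T i := by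
    intro t ht
    by_contra htT
    refine ht ((lintegral_congr fun σ => ?_).trans lintegral_zero)
    by_contra hσ
    have hσω : EqOn (subst Λ σ (update ω i t)) ω (↑(insert i Λ))ᶜ :=
      (subst_eqOn_compl.mono (compl_subset_compl.2 (by simp))).trans (hupd t)
    simpa [hi, htT] using hsupp _ hσω hσ i (Finset.mem_insert_self i Λ)
  rw [hrestr _ subset_rfl ω (eqOn_refl _ _), lmarginal_insert _ hf hi,
    ← setLIntegral_eq_of_support_subset hvanish]
  exact lintegral_congr fun t => (hrestr Λ (Finset.subset_insert i Λ) _ (hupd t)).symm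

end FreeKernel

variable {ρ : ι → Config ι E → ℝ≥0}

section GoodSets

variable {i j : ι} {V V₀ : Finset ι} {ω ζ η : Config ι E}

theorem bSet_congr (h : EqOn ω η (↑(insert j V))ᶜ) : bSet lam ρ j V ω = bSet lam ρ j V η := by
  have hsubst : ∀ x (σ : {y // y ∈ V} → E),
      subst V σ (update ω j x) = subst V σ (update η j x) := fun x σ => by
    funext l
    by_cases hV : l ∈ V
    · simp [hV]
    by_cases hl : l = j
    · subst hl; simp [hV]
    · simp only [subst_apply_of_notMem hV, update_of_ne hl]
      exact h (by simp [hl, hV])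
  simp only [bSet, hsubst]

theorem bSet_anti (hV : V₀ ⊆ V) : bSet lam ρ j V ω ⊆ bSet lam ρ j V₀ ω := by
  intro x hx
  have key : ∀ τ : {y // y ∈ V₀} → E, subst V₀ τ (update ω j x)
      = subst V (fun l => subst V₀ τ (update ω j x) l) (update ω j x) := fun τ =>
    (subst_restrict_of_eqOn (subst_eqOn_compl.mono (compl_subset_compl.2 hV))).symm
  refine ⟨fun τ => key τ ▸ hx.1 _, fun i hi => ⟨(hx.2 i hi).1.trans_le ?_,
    lt_of_le_of_lt ?_ (hx.2 i hi).2⟩⟩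
  · exact le_iInf fun τ => key τ ▸ iInf_le _ _
  · exact iSup_le fun τ => key τ ▸ le_iSup (fun σ => freeF lam {i} (rat ρ i j)
      (subst V σ (update ω j x))) _

theorem mem_BSet_of_eqOn (hζ : ζ ∈ BSet lam ρ j V) (hV : V₀ ⊆ V) (hj : j ∉ V)
    (hη : EqOn η ζ (↑V)ᶜ) : η ∈ BSet lam ρ j V₀ := by
  have hjη : η j = ζ j := hη (show j ∉ (V : Set ι) from hj)
  refine bSet_anti hV ?_
  rw [hjη, bSet_congr (hη.mono (compl_subset_compl.2 (by simp)))]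
  exact hζ

theorem pos_of_mem_BSet (hζ : ζ ∈ BSet lam ρ j V) (hη : EqOn η ζ (↑V)ᶜ) : 0 < ρ j η := by
  rw [eq_subst_update_self_of_eqOn hη]
  exact hζ.1 _

theorem bddAwayOn_freeF_rat_of_mem_BSet (hζ : ζ ∈ BSet lam ρ j V) (hij : i ≠ j) :
    BddAwayOn (freeF lam {i} (rat ρ i j)) {η | EqOn η ζ (↑V)ᶜ} := by
  obtain ⟨hc, hC⟩ := hζ.2 i hij
  refine ⟨_, _, hc, hC, fun η hη => ?_⟩
  rw [eq_subst_update_self_of_eqOn (j := j) hη]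
  exact ⟨iInf_le _ _, le_iSup (fun σ => freeF lam {i} (rat ρ i j)
      (subst V σ (update ζ j (ζ j)))) _⟩

end GoodSets

def BSetF (lam : ι → Measure E) (ρ : ι → Config ι E → ℝ≥0) (Λ W : Finset ι) :
    Set (Config ι E) :=
  {ζ | ∀ m ∈ Λ, ζ ∈ BSet lam ρ m (Λ.erase m ∪ W)}

section GoodConfigurations

variable {Λ W W₀ : Finset ι} {k : ι} {ω ζ η : Config ι E}

theorem subst_mem_BSetF_iff {x : {y // y ∈ Λ} → E} :
    subst Λ x ω ∈ BSetF lam ρ Λ W ↔ x ∈ bSetF lam ρ Λ W ω := by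
  have hcongr : ∀ m ∈ Λ,
      bSet lam ρ m (Λ.erase m ∪ W) (subst Λ x ω) = bSet lam ρ m (Λ.erase m ∪ W) ω := by
    refine fun m hm => bSet_congr (subst_eqOn_compl.mono (compl_subset_compl.2 fun l hl => ?_))
    by_cases hlm : l = m <;> simp_all
  refine ⟨fun h m => ?_, fun h m hm => ?_⟩
  · have := h m.1 m.2
    rwa [BSet, mem_ofPred_eq, hcongr m.1 m.2, subst_apply_of_mem m.2] at this
  · rw [BSet, mem_ofPred_eq, hcongr m hm, subst_apply_of_mem hm]
    exact h ⟨m, hm⟩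

theorem exists_mem_BSetF (h1 : H1 lam ρ) (hΛW : Disjoint Λ W) (ω : Config ι E) :
    ∃ ζ ∈ BSetF lam ρ Λ W, EqOn ζ ω (↑Λ)ᶜ := by
  have hm : ∀ m : {y // y ∈ Λ}, m.1 ∉ Λ.erase m.1 ∪ W := fun m => by
    simpa using Finset.disjoint_left.1 hΛW m.2
  choose x hx using fun m : {y // y ∈ Λ} => h1 ω m.1 _ (hm m)
  exact ⟨subst Λ x ω, subst_mem_BSetF_iff.2 hx, subst_eqOn_compl⟩

theorem mem_BSetF_insert (hk : k ∉ Λ) :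
    ζ ∈ BSetF lam ρ (insert k Λ) W ↔ ζ ∈ BSet lam ρ k (Λ ∪ W) ∧ ζ ∈ BSetF lam ρ Λ (insert k W) := by
  have hset : ∀ m ∈ Λ, (insert k Λ).erase m ∪ W = Λ.erase m ∪ insert k W := fun m hm => by
    rw [Finset.erase_insert_of_ne (by rintro rfl; exact hk hm), Finset.insert_union,
      Finset.union_insert]
  simp only [BSetF, mem_ofPred_eq, Finset.forall_mem_insert, Finset.erase_insert hk]
  exact and_congr_right' (forall₂_congr fun m hm => by rw [hset m hm])

theorem mem_BSetF_of_eqOn (hζ : ζ ∈ BSetF lam ρ Λ W) (hW : W₀ ⊆ W) (hΛW : Disjoint Λ W)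
    (hη : EqOn η ζ (↑W)ᶜ) : η ∈ BSetF lam ρ Λ W₀ := fun m hm =>
  mem_BSet_of_eqOn (hζ m hm) (Finset.union_subset_union le_rfl hW)
    (by simpa using Finset.disjoint_left.1 hΛW hm)
    (hη.mono (compl_subset_compl.2 (by simp)))

end GoodConfigurations

variable {ρF : Finset ι → Config ι E → ℝ≥0}

noncomputable def freeRatio (lam : ι → Measure E) (ρ : ι → Config ι E → ℝ≥0)
    (ρF : Finset ι → Config ι E → ℝ≥0) (i : ι) (Λ : Finset ι) : Config ι E → ℝ≥0∞ :=
  freeF lam {i} fun η => (ρ i η : ℝ≥0∞) / ρF Λ η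

variable {Λ : Finset ι} {i : ι} {ζ η : Config ι E}

theorem freeRatio_update (t : E) :
    freeRatio lam ρ ρF i Λ (update η i t) = freeRatio lam ρ ρF i Λ η :=
  freeF_singleton_update i _ η t

theorem rhoF_insert_eq (hrec : IsRec lam ρ ρF) (hi : i ∉ Λ) (hζ : ζ ∈ BSetF lam ρ Λ {i})
    (hη : EqOn η ζ (↑Λ)ᶜ) :
    (ρF (insert i Λ) η : ℝ≥0∞) = ρF Λ η / (ρF Λ ζ / ρ i ζ * freeRatio lam ρ ρF i Λ ζ) := by
  have hx : subst Λ (fun l => ζ l) η = ζ := subst_restrict_of_eqOn hη.symm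
  rw [(hrec.2.2.2 Λ i hi η).2 _ (subst_mem_BSetF_iff.1 (by rwa [hx])), Rexpr, hx, hrec.2.1 i]
  rfl

theorem rhoF_insert_eq_div_freeRatio (hrec : IsRec lam ρ ρF) (hi : i ∉ Λ)
    (hη : η ∈ BSetF lam ρ Λ {i}) (hpos : 0 < ρF Λ η) (hK₀ : freeRatio lam ρ ρF i Λ η ≠ 0)
    (hK : freeRatio lam ρ ρF i Λ η ≠ ⊤) :
    (ρF (insert i Λ) η : ℝ≥0∞) = ρ i η / freeRatio lam ρ ρF i Λ η := by
  rw [rhoF_insert_eq hrec hi hη (eqOn_refl _ _),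
    ENNReal.div_div_mul_cancel_left (by simpa using hpos.ne') ENNReal.coe_ne_top hK₀ hK]

theorem rhoF_pos_and_bddAwayOn_freeRatio (hrec : IsRec lam ρ ρF)
    (hnorm : ∀ i ω, freeF lam {i} (fun η => (ρ i η : ℝ≥0∞)) ω = 1) (Λ : Finset ι) :
    ∀ {W : Finset ι} {ζ : Config ι E}, Disjoint Λ W → ζ ∈ BSetF lam ρ Λ W →
      (∀ η, EqOn η ζ (↑W)ᶜ → 0 < ρF Λ η) ∧
      ∀ i ∈ W, BddAwayOn (freeRatio lam ρ ρF i Λ) {η | EqOn η ζ (↑W)ᶜ} := by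
  induction Λ using Finset.induction_on with
  | empty =>
    refine fun _ _ => ⟨fun η _ => by simp [hrec.1], fun i _ =>
      ⟨1, 1, one_pos, ENNReal.one_lt_top, fun η _ => ?_⟩⟩
    simp [freeRatio, hrec.1, hnorm]
  | insert k Λ hk ih =>
    intro W ζ hΛW hζ
    obtain ⟨hζk, hζΛ⟩ := (mem_BSetF_insert hk).1 hζ
    have hΛW' : Disjoint Λ (insert k W) :=
      Finset.disjoint_insert_right.2 ⟨hk, hΛW.mono_left (Finset.subset_insert k Λ)⟩
    obtain ⟨ihpos, ihbdd⟩ := ih hΛW' hζΛ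
    set S := {η | EqOn η ζ (↑W)ᶜ}
    have hS : ∀ η ∈ S, EqOn η ζ (↑(insert k W))ᶜ := fun η hη =>
      hη.mono (compl_subset_compl.2 (by simp))
    have hK := (ihbdd k (Finset.mem_insert_self k W)).mono hS
    have hclosed : ∀ η ∈ S,
        (ρF (insert k Λ) η : ℝ≥0∞) = ρ k η / freeRatio lam ρ ρF k Λ η := fun η hη =>
      rhoF_insert_eq_div_freeRatio hrec hk
        (mem_BSetF_of_eqOn hζΛ (by simp) hΛW' (hS η hη)) (ihpos η (hS η hη))
        (hK.ne_zero hη) (hK.ne_top hη)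
    have hζS : ∀ η ∈ S, EqOn η ζ (↑(Λ ∪ W))ᶜ := fun η hη =>
      hη.mono (compl_subset_compl.2 (by simp))
    refine ⟨fun η hη => ?_, fun i hi => ?_⟩
    · have hpos : (0 : ℝ≥0∞) < ρF (insert k Λ) η := by
        rw [hclosed η hη]
        exact ENNReal.div_pos (by simpa using (pos_of_mem_BSet hζk (hζS η hη)).ne')
          (hK.ne_top hη)
      exact_mod_cast hpos
    · have hik : i ≠ k := by
        rintro rfl
        exact Finset.disjoint_left.1 hΛW (Finset.mem_insert_self i Λ) hi
      have hupd : ∀ η ∈ S, ∀ t, update η i t ∈ S := fun η hη t => eqOn_update_of_mem hη hi t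
      refine (((bddAwayOn_freeF_rat_of_mem_BSet hζk hik).mono hζS).freeF_singleton_mul hK
        hupd).congr fun η hη => ?_
      simp only [freeRatio, freeF_singleton]
      refine lintegral_congr fun t => ?_
      rw [hclosed _ (hupd η hη t), ENNReal.div_div_right_eq_div_mul (hK.ne_zero (hupd η hη t))
        (hK.ne_top (hupd η hη t))]
      rfl

theorem rho_update_ne_zero_of_rhoF_ne_zero (hrec : IsRec lam ρ ρF) (hi : i ∉ Λ)
    (hζ : ζ ∈ BSetF lam ρ Λ {i}) (hη : EqOn η ζ (↑(insert i Λ))ᶜ)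
    (hne : ρF (insert i Λ) η ≠ 0) : ρ i (update ζ i (η i)) ≠ 0 := by
  have hζ' : update ζ i (η i) ∈ BSetF lam ρ Λ {i} :=
    mem_BSetF_of_eqOn hζ subset_rfl (Finset.disjoint_singleton_right.2 hi)
      (eqOn_update_of_mem (eqOn_refl _ _) (Finset.mem_singleton_self i) _)
  have hηζ' : EqOn η (update ζ i (η i)) (↑Λ)ᶜ := fun l hl => by
    by_cases hli : l = i
    · subst hli; simp
    · rw [update_of_ne hli]
      exact hη (by simp [hli, show l ∉ Λ from hl])
  intro h0
  have hrec_eq := rhoF_insert_eq hrec hi hζ' hηζ'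
  rw [h0, ENNReal.coe_zero] at hrec_eq
  exact hne (by exact_mod_cast ENNReal.eq_zero_of_eq_div_div_zero_mul ENNReal.coe_ne_top hrec_eq)

theorem freeF_rhoF_insert_eq_lintegral (hrec : IsRec lam ρ ρF)
    (hnorm : ∀ i ω, freeF lam {i} (fun η => (ρ i η : ℝ≥0∞)) ω = 1) (h1 : H1 lam ρ)
    (hi : i ∉ Λ) (ω : Config ι E) :
    freeF lam (insert i Λ) (fun η => (ρF (insert i Λ) η : ℝ≥0∞)) ω
      = ∫⁻ t, freeF lam Λ (fun η => (ρF (insert i Λ) η : ℝ≥0∞)) (update ω i t) ∂lam i := by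
  choose ζ hζ hζω using fun k => exists_mem_BSetF h1
    (Finset.disjoint_singleton_right.2 ((insert i Λ).notMem_erase k)) ω
  set g : ι → E → ℝ≥0∞ := fun k t => ρ k (update (ζ k) k t)
  have hg : ∀ k, Measurable (g k) := fun k =>
    ((hrec.2.1 k ▸ hrec.2.2.1 {k}).coe_nnreal_ennreal).comp (measurable_update _)
  have hint : ∀ k, ∫⁻ t, g k t ∂lam k = 1 := fun k =>
    (freeF_singleton k _ (ζ k)).symm.trans (hnorm k (ζ k))
  have _ : ∀ k, SigmaFinite ((lam k).restrict {t | 0 < g k t}) := fun k =>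
    sigmaFinite_restrict_pos_of_lintegral_ne_top (hg k) (by simp [hint k])
  refine freeF_insert_eq_lintegral (T := fun k => {t | 0 < g k t})
    (fun k => measurableSet_lt measurable_const (hg k)) (hrec.2.2.1 _).coe_nnreal_ennreal hi
    fun η hη hne k hk => ?_
  rw [← Finset.insert_erase hk] at hη hne
  have hηζ : EqOn η (ζ k) (↑(insert k ((insert i Λ).erase k)))ᶜ :=
    hη.trans ((hζω k).symm.mono (compl_subset_compl.2
      (Finset.coe_subset.2 (Finset.subset_insert _ _))))
  have := rho_update_ne_zero_of_rhoF_ne_zero hrec ((insert i Λ).notMem_erase k) (hζ k) hηζ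
    (by exact_mod_cast hne)
  simpa [g, pos_iff_ne_zero] using this

theorem freeF_rhoF_insert_eq (hrec : IsRec lam ρ ρF) (hi : i ∉ Λ) (hζ : ζ ∈ BSetF lam ρ Λ {i})
    (hη : EqOn η ζ (↑Λ)ᶜ) (hnormΛ : freeF lam Λ (fun η => (ρF Λ η : ℝ≥0∞)) η = 1)
    (hpos : 0 < ρF Λ ζ) (hK₀ : freeRatio lam ρ ρF i Λ ζ ≠ 0)
    (hK : freeRatio lam ρ ρF i Λ ζ ≠ ⊤) :
    freeF lam Λ (fun η => (ρF (insert i Λ) η : ℝ≥0∞)) η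
      = ρ i ζ / ρF Λ ζ / freeRatio lam ρ ρF i Λ ζ := by
  have hinv := ENNReal.inv_div_mul (b := ρ i ζ) (by simpa using hpos.ne') ENNReal.coe_ne_top
    hK₀ hK
  calc freeF lam Λ (fun η => (ρF (insert i Λ) η : ℝ≥0∞)) η
      = freeF lam Λ (fun η => (ρF Λ η : ℝ≥0∞)) η
          * (ρF Λ ζ / ρ i ζ * freeRatio lam ρ ρF i Λ ζ)⁻¹ := by
        refine (lintegral_congr fun σ => ?_).trans (lintegral_mul_const' _ _ ?_)
        · dsimp only
          rw [rhoF_insert_eq hrec hi hζ (subst_eqOn_compl.trans hη), div_eq_mul_inv]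
        · rw [hinv]
          exact (ENNReal.div_lt_top (ENNReal.div_lt_top ENNReal.coe_ne_top
            (by simpa using hpos.ne')).ne hK₀).ne
    _ = ρ i ζ / ρF Λ ζ / freeRatio lam ρ ρF i Λ ζ := by rw [hnormΛ, one_mul, hinv]

theorem freeF_rhoF_eq_one (hrec : IsRec lam ρ ρF)
    (hnorm : ∀ i ω, freeF lam {i} (fun η => (ρ i η : ℝ≥0∞)) ω = 1) (h1 : H1 lam ρ)
    (Λ : Finset ι) (ω : Config ι E) : freeF lam Λ (fun η => (ρF Λ η : ℝ≥0∞)) ω = 1 := by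
  induction Λ using Finset.induction_on generalizing ω with
  | empty => simp [freeF_empty, hrec.1]
  | insert i Λ hi ih =>
    have hΛi : Disjoint Λ {i} := Finset.disjoint_singleton_right.2 hi
    obtain ⟨ζ, hζ, hζω⟩ := exists_mem_BSetF h1 hΛi ω
    obtain ⟨hpos, hbdd⟩ := rhoF_pos_and_bddAwayOn_freeRatio hrec hnorm Λ hΛi hζ
    set K := freeRatio lam ρ ρF i Λ ζ
    have hupd : ∀ t, EqOn (update ζ i t) ζ (↑({i} : Finset ι))ᶜ := fun t =>
      eqOn_update_of_mem (eqOn_refl _ _) (Finset.mem_singleton_self i) t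
    have hK := hbdd i (Finset.mem_singleton_self i)
    have hK₀ : K ≠ 0 := hK.ne_zero (eqOn_refl _ _)
    have hKT : K ≠ ⊤ := hK.ne_top (eqOn_refl _ _)
    have hinner : ∀ t, freeF lam Λ (fun η => (ρF (insert i Λ) η : ℝ≥0∞)) (update ω i t)
        = ρ i (update ζ i t) / ρF Λ (update ζ i t) / K := fun t => by
      have hωζ : EqOn (update ω i t) (update ζ i t) (↑Λ)ᶜ := fun l hl => by
        by_cases hli : l = i
        · subst hli; simp
        · simp [update_of_ne hli, hζω hl]
      rw [freeF_rhoF_insert_eq hrec hi (mem_BSetF_of_eqOn hζ subset_rfl hΛi (hupd t)) hωζ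
        (ih _) (hpos _ (hupd t)) (by rwa [freeRatio_update])
        (by rwa [freeRatio_update]),
        freeRatio_update]
    calc freeF lam (insert i Λ) (fun η => (ρF (insert i Λ) η : ℝ≥0∞)) ω
        = ∫⁻ t, ρ i (update ζ i t) / ρF Λ (update ζ i t) / K ∂lam i := by
          rw [freeF_rhoF_insert_eq_lintegral hrec hnorm h1 hi ω]
          exact lintegral_congr hinner
      _ = K / K := by
          simp_rw [div_eq_mul_inv _ K]
          rw [lintegral_mul_const' _ _ (ENNReal.inv_ne_top.2 hK₀)]
          congr 1
          exact (freeF_singleton i (fun η => (ρ i η : ℝ≥0∞) / ρF Λ η) ζ).symm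
      _ = 1 := ENNReal.div_self hK₀ hKT

end GibbsSingleton

theorem constructed_family_normalized_general
    {d : ℕ} {E : Type*} [MeasurableSpace E]
    (lam : (Fin d → ℤ) → Measure E)
    (ρ : (Fin d → ℤ) → Config (Fin d → ℤ) E → ℝ≥0)
    (hnorm : ∀ (i : Fin d → ℤ) (ω : Config (Fin d → ℤ) E),
      freeF lam {i} (fun η => (ρ i η : ℝ≥0∞)) ω = 1)
    (h1 : H1 lam ρ)
    (ρF : Finset (Fin d → ℤ) → Config (Fin d → ℤ) E → ℝ≥0)
    (hrec : IsRec lam ρ ρF) :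
    ∀ (Λ : Finset (Fin d → ℤ)) (ω : Config (Fin d → ℤ) E),
      freeF lam Λ (fun η => (ρF Λ η : ℝ≥0∞)) ω = 1 :=
  freeF_rhoF_eq_one hrec hnorm h1

/-- **(P1).**  If the singletons are normalized and satisfy (H1) and (H2), then every
function `ρ_Λ` of the recursively constructed family is normalized:
`λ_Λ(ρ_Λ ∣ ω) = 1` for every finite `Λ` and every `ω`. -/
theorem constructed_family_normalized
    {d : ℕ} (hd : 0 < d) {E : Type*} [MeasurableSpace E]
    (lam : (Fin d → ℤ) → Measure E)
    (ρ : (Fin d → ℤ) → Config (Fin d → ℤ) E → ℝ≥0)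
    (hmeas : ∀ i, Measurable (ρ i))
    (hnorm : ∀ (i : Fin d → ℤ) (ω : Config (Fin d → ℤ) E),
      freeF lam {i} (fun η => (ρ i η : ℝ≥0∞)) ω = 1)
    (h1 : H1 lam ρ) (h2 : H2 lam ρ)
    (ρF : Finset (Fin d → ℤ) → Config (Fin d → ℤ) E → ℝ≥0)
    (hrec : IsRec lam ρ ρF) :
    ∀ (Λ : Finset (Fin d → ℤ)) (ω : Config (Fin d → ℤ) E),
      freeF lam Λ (fun η => (ρF Λ η : ℝ≥0∞)) ω = 1 :=
  constructed_family_normalized_general lam ρ hnorm h1 ρF hrec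
end

section
/- Let E be a finite set, let each λ^i be the counting measure on E, and let {ρ_i}_{i∈ℤ^d} be functions ρ_i : Ω → [0,∞) which are normalized (λ_i(ρ_i ∣ ω) = 1 for all ω) and very weakly positive, i.e. for each ω, j and finite V ⊆ ℤ^d∖{j} there exists x_j ∈ E with ρ_j(x_j σ_V ω) > 0 for all σ_V ∈ E^V (the set of such x_j being b(j,V,ω)). Suppose that for every i ≠ j, ω ∈ Ω, u_i, u_j ∈ E, x_i ∈ b(i,{j},ω) and x_j ∈ b(j,{i},ω): ρ_i(x_j u_i ω) ρ_j(u_j u_i ω) ρ_i(x_i u_j ω) ρ_j(x_j x_i ω) = ρ_j(x_i u_j ω) ρ_i(u_i u_j ω) ρ_j(x_j u_i ω) ρ_i(x_i x_j ω). Then the family {ρ_i} satisfies hypothesis (H2): for all such ω, x_i, x_j, ρ_i(ω)ρ_j(x_i ω) / (ρ_i(x_i ω) λ_j(ρ_j ρ_i^{-1})(x_i ω)) = ρ_j(ω)ρ_i(x_j ω) / (ρ_j(x_j ω) λ_i(ρ_i ρ_j^{-1})(x_j ω)). -/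
open MeasureTheory ProbabilityTheory
open scoped ENNReal NNReal

open GibbsSingleton MeasureTheory ProbabilityTheory

namespace GibbsSingleton

/-- The set of `x` at site `j` making `ρ_j` positive uniformly over `V`
(the good sets of very weak positivity, for finite `E`). -/
def posb {ι E : Type*} [DecidableEq ι] (ρ : ι → Config ι E → ℝ≥0)
    (j : ι) (V : Finset ι) (ω : Config ι E) : Set E :=
  {x | ∀ σ : {y // y ∈ V} → E, 0 < ρ j (subst V σ (Function.update ω j x))}

end GibbsSingleton

/-!
Fix `i ≠ j` and `ω` off `{i, j}`, and write `F u v`, `G u v` for `ρ_i`, `ρ_j` at the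
configuration with `u` at `i` and `v` at `j`. Normalization says that `F` sums to one over
its first argument and `G` over its second. Inserting these sums into
`G x y · Σ_u F u y / G u y` and `F x y · Σ_v G x v / F x v` turns both into double sums whose
terms agree by the Dachian–Nahapetian identity. Cross-multiplying (H2) and using this
equality reduces it to the identity at `(u, v) = (ω_i, ω_j)`; the good values `x`, `y` keep
every denominator positive.
-/

namespace GibbsSingleton

section Singleton

variable {ι E : Type*} [DecidableEq ι]

theorem subst_singleton (j : ι) (σ : {x // x ∈ ({j} : Finset ι)} → E) (ω : Config ι E) :
    subst {j} σ ω = Function.update ω j (σ ⟨j, Finset.mem_singleton_self j⟩) := by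
  funext k
  rcases eq_or_ne k j with rfl | hk
  · simp [subst]
  · simp [subst, hk]

theorem mem_posb_singleton_iff {ρ : ι → Config ι E → ℝ≥0} {i j : ι} {ω : Config ι E} {x : E} :
    x ∈ posb ρ j {i} ω ↔ ∀ u, 0 < ρ j (Function.update (Function.update ω j x) i u) := by
  simp only [posb, Set.mem_ofPred_eq, subst_singleton]
  exact ⟨fun h u => h fun _ => u, fun h σ => h _⟩

variable [Fintype E] [MeasurableSpace E] [MeasurableSingletonClass E]

theorem lintegral_pi_count {κ : Type*} [Fintype κ] [DecidableEq κ] (f : (κ → E) → ℝ≥0∞) :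
    ∫⁻ σ, f σ ∂(Measure.pi fun _ : κ => (Measure.count : Measure E)) = ∑ σ, f σ := by
  simp [lintegral_fintype]

theorem freeF_count_singleton (j : ι) (h : Config ι E → ℝ≥0∞) (ω : Config ι E) :
    freeF (fun _ => (Measure.count : Measure E)) {j} h ω
      = ∑ u : E, h (Function.update ω j u) := by
  rw [freeF, lintegral_pi_count, ← (Equiv.funUnique _ E).symm.sum_comp]
  simp [subst_singleton]

end Singleton

section TwoSite

variable {α : Type*} [Fintype α]

theorem sum_div_ne_zero {f g : α → ℝ≥0} (hg : ∑ v, g v = 1) (hf : ∀ v, 0 < f v) :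
    ∑ v, g v / f v ≠ 0 := by
  intro h
  simp only [Finset.sum_eq_zero_iff, Finset.mem_univ, true_implies, div_eq_zero_iff,
    (hf _).ne', or_false] at h
  simp [h] at hg

variable {F G : α → α → ℝ≥0} {x y : α}

theorem mul_sum_div_eq_mul_sum_div (hFx : ∀ v, 0 < F x v) (hGy : ∀ u, 0 < G u y)
    (hFsum : ∀ v, ∑ u, F u v = 1) (hGsum : ∀ u, ∑ v, G u v = 1)
    (hdn : ∀ u v, F u y * G u v * F x v * G x y = G x v * F u v * G u y * F x y) :
    G x y * ∑ u, F u y / G u y = F x y * ∑ v, G x v / F x v := by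
  calc G x y * ∑ u, F u y / G u y
      = ∑ u, ∑ v, G u v * (G x y * (F u y / G u y)) := by
        simp only [Finset.mul_sum, ← Finset.sum_mul, hGsum, one_mul]
    _ = ∑ v, ∑ u, F u v * (F x y * (G x v / F x v)) := by
        rw [Finset.sum_comm]
        refine Finset.sum_congr rfl fun v _ => Finset.sum_congr rfl fun u _ => ?_
        have := (hGy u).ne'
        have := (hFx v).ne'
        field_simp
        convert hdn u v using 1 <;> ring
    _ = F x y * ∑ v, G x v / F x v := by
        simp only [Finset.mul_sum, ← Finset.sum_mul, hFsum, one_mul]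

theorem two_site_ratio_eq (hFx : ∀ v, 0 < F x v) (hGy : ∀ u, 0 < G u y)
    (hFsum : ∀ v, ∑ u, F u v = 1) (hGsum : ∀ u, ∑ v, G u v = 1)
    (hdn : ∀ u v, F u y * G u v * F x v * G x y = G x v * F u v * G u y * F x y) (a b : α) :
    ((F a b : ℝ≥0∞) * G x b) / (F x b * ∑ v, (G x v : ℝ≥0∞) / F x v)
      = ((G a b : ℝ≥0∞) * F a y) / (G a y * ∑ u, (F u y : ℝ≥0∞) / G u y) := by
  have hS₁ := sum_div_ne_zero (hGsum x) hFx
  have hS₂ := sum_div_ne_zero (hFsum y) hGy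
  have hden₁ : F x b * ∑ v, G x v / F x v ≠ 0 := mul_ne_zero (hFx b).ne' hS₁
  have hden₂ : G a y * ∑ u, F u y / G u y ≠ 0 := mul_ne_zero (hGy a).ne' hS₂
  simp only [← ENNReal.coe_div (hFx _).ne', ← ENNReal.coe_div (hGy _).ne',
    ← ENNReal.ofNNReal_finsetSum, ← ENNReal.coe_mul, ← ENNReal.coe_div hden₁,
    ← ENNReal.coe_div hden₂, ENNReal.coe_inj, div_eq_div_iff hden₁ hden₂]
  refine mul_right_cancel₀ (hGy x).ne' ?_
  calc F a b * G x b * (G a y * ∑ u, F u y / G u y) * G x y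
      = F a b * G x b * G a y * (G x y * ∑ u, F u y / G u y) := by ring
    _ = F a b * G x b * G a y * (F x y * ∑ v, G x v / F x v) := by
        rw [mul_sum_div_eq_mul_sum_div hFx hGy hFsum hGsum hdn]
    _ = G x b * F a b * G a y * F x y * ∑ v, G x v / F x v := by ring
    _ = F a y * G a b * F x b * G x y * ∑ v, G x v / F x v := by rw [hdn]
    _ = G a b * F a y * (F x b * ∑ v, G x v / F x v) * G x y := by ring

end TwoSite

end GibbsSingleton

theorem DN_condition_implies_H2_general
    {d : ℕ} {E : Type*} [Fintype E] [MeasurableSpace E]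
    [MeasurableSingletonClass E]
    (ρ : (Fin d → ℤ) → Config (Fin d → ℤ) E → ℝ≥0)
    (hnorm : ∀ (i : Fin d → ℤ) (ω : Config (Fin d → ℤ) E),
      freeF (fun _ => (Measure.count : Measure E)) {i} (fun η => (ρ i η : ℝ≥0∞)) ω = 1)
    (hDN : ∀ (i j : Fin d → ℤ), i ≠ j → ∀ (ω : Config (Fin d → ℤ) E) (ui uj : E),
      ∀ xi ∈ posb ρ i {j} ω, ∀ xj ∈ posb ρ j {i} ω,
        ρ i (Function.update (Function.update ω i ui) j xj) *
          ρ j (Function.update (Function.update ω i ui) j uj) *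
          ρ i (Function.update (Function.update ω j uj) i xi) *
          ρ j (Function.update (Function.update ω i xi) j xj)
        = ρ j (Function.update (Function.update ω j uj) i xi) *
            ρ i (Function.update (Function.update ω j uj) i ui) *
            ρ j (Function.update (Function.update ω i ui) j xj) *
            ρ i (Function.update (Function.update ω j xj) i xi)) :
    ∀ (i j : Fin d → ℤ), i ≠ j → ∀ ω : Config (Fin d → ℤ) E,
      ∀ xi ∈ posb ρ i {j} ω, ∀ xj ∈ posb ρ j {i} ω,
        ((ρ i ω : ℝ≥0∞) * (ρ j (Function.update ω i xi) : ℝ≥0∞)) /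
            ((ρ i (Function.update ω i xi) : ℝ≥0∞) *
              freeF (fun _ => (Measure.count : Measure E)) {j} (rat ρ j i)
                (Function.update ω i xi))
          = ((ρ j ω : ℝ≥0∞) * (ρ i (Function.update ω j xj) : ℝ≥0∞)) /
              ((ρ j (Function.update ω j xj) : ℝ≥0∞) *
                freeF (fun _ => (Measure.count : Measure E)) {i} (rat ρ i j)
                  (Function.update ω j xj)) := by
  intro i j hij ω xi hxi xj hxj
  have hsum : ∀ k η, ∑ u, ρ k (Function.update η k u) = 1 := fun k η => by
    simpa [freeF_count_singleton, ← ENNReal.ofNNReal_finsetSum] using hnorm k η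
  have key := two_site_ratio_eq
    (F := fun u v => ρ i (Function.update (Function.update ω j v) i u))
    (G := fun u v => ρ j (Function.update (Function.update ω j v) i u))
    (fun v => by simpa [Function.update_comm hij] using mem_posb_singleton_iff.1 hxi v)
    (mem_posb_singleton_iff.1 hxj) (fun v => hsum i _)
    (fun u => by simpa [Function.update_comm hij] using hsum j (Function.update ω i u))
    (fun u v => by simpa [Function.update_comm hij] using hDN i j hij ω u v xi hxi xj hxj)
    (ω i) (ω j)
  have hω : Function.update (Function.update ω j xj) i (ω i) = Function.update ω j xj :=
    Function.update_eq_self_iff.2 (Function.update_of_ne hij xj ω).symm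
  rw [freeF_count_singleton, freeF_count_singleton]
  simpa [rat, Function.update_comm hij, hω] using key

/-- **Dachian–Nahapetian compatibility implies (H2).**  For finite `E` with counting
measures, normalized very weakly positive singleton weights satisfying the
Dachian–Nahapetian pointwise identity satisfy hypothesis (H2). -/
theorem DN_condition_implies_H2
    {d : ℕ} (hd : 0 < d) {E : Type*} [Fintype E] [MeasurableSpace E]
    [MeasurableSingletonClass E]
    (ρ : (Fin d → ℤ) → Config (Fin d → ℤ) E → ℝ≥0)
    (hnorm : ∀ (i : Fin d → ℤ) (ω : Config (Fin d → ℤ) E),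
      freeF (fun _ => (Measure.count : Measure E)) {i} (fun η => (ρ i η : ℝ≥0∞)) ω = 1)
    (hvwp : ∀ (ω : Config (Fin d → ℤ) E) (j : Fin d → ℤ) (V : Finset (Fin d → ℤ)),
      j ∉ V → (posb ρ j V ω).Nonempty)
    (hDN : ∀ (i j : Fin d → ℤ), i ≠ j → ∀ (ω : Config (Fin d → ℤ) E) (ui uj : E),
      ∀ xi ∈ posb ρ i {j} ω, ∀ xj ∈ posb ρ j {i} ω,
        ρ i (Function.update (Function.update ω i ui) j xj) *
          ρ j (Function.update (Function.update ω i ui) j uj) *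
          ρ i (Function.update (Function.update ω j uj) i xi) *
          ρ j (Function.update (Function.update ω i xi) j xj)
        = ρ j (Function.update (Function.update ω j uj) i xi) *
            ρ i (Function.update (Function.update ω j uj) i ui) *
            ρ j (Function.update (Function.update ω i ui) j xj) *
            ρ i (Function.update (Function.update ω j xj) i xi)) :
    ∀ (i j : Fin d → ℤ), i ≠ j → ∀ ω : Config (Fin d → ℤ) E,
      ∀ xi ∈ posb ρ i {j} ω, ∀ xj ∈ posb ρ j {i} ω,
        ((ρ i ω : ℝ≥0∞) * (ρ j (Function.update ω i xi) : ℝ≥0∞)) /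
            ((ρ i (Function.update ω i xi) : ℝ≥0∞) *
              freeF (fun _ => (Measure.count : Measure E)) {j} (rat ρ j i)
                (Function.update ω i xi))
          = ((ρ j ω : ℝ≥0∞) * (ρ i (Function.update ω j xj) : ℝ≥0∞)) /
              ((ρ j (Function.update ω j xj) : ℝ≥0∞) *
                freeF (fun _ => (Measure.count : Measure E)) {i} (rat ρ i j)
                  (Function.update ω j xj)) :=
  DN_condition_implies_H2_general ρ hnorm hDN
end
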